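/- arXiv:1204.2047 — 6 statements merged into one kernel-verified Lean document; each statement's English description precedes it below -/
import Mathlib

section
/- Let X be a real Banach space, C a nonempty bounded subset of X, and f : X → ℝ bounded below on C. Define r(x) = sup{‖x−z‖ − f(z) : z ∈ C} and let ∂r(x) = {x* ∈ X* : ∀ y ∈ X, ⟨x*, y−x⟩ ≤ r(y) − r(x)} be the subdifferential of the convex function r at x. Then the set G = {x ∈ X : for every x* ∈ ∂r(x), sup{⟨x*, x−z⟩ − f(z) : z ∈ C} = r(x)} is a G_δ dense subset of X. -/
/-!
The function `r` is `1`-Lipschitz, so its subgradients lie in the unit ball of the dual. The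
complement of the good set is the increasing union over `ε > 0` of the sets of points having a
subgradient `g` with `g (x - z) ≤ f z + r x - ε` for all `z ∈ C`. Each of these sets is closed by
Banach–Alaoglu: along an ultrafilter, subgradients at nearby points converge weak* to a subgradient
at the limit point. Each has dense complement: if `z` almost attains `r x`, then at points `x'`
pushed a little beyond `x` on the ray from `z` through `x`, every subgradient almost attains
`‖x' - z‖` on `x' - z`. Baire's theorem concludes.
-/

open Filter Topology

section Subgradients

variable {X : Type*} [NormedAddCommGroup X] [NormedSpace ℝ X]

def subgradients (r : X → ℝ) (x : X) : Set (X →L[ℝ] ℝ) :=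
  {g | ∀ y, g (y - x) ≤ r y - r x}

variable {r : X → ℝ} {x : X} {g : X →L[ℝ] ℝ}

theorem sub_le_apply_of_mem_subgradients (hg : g ∈ subgradients r x) (y : X) :
    r x - r y ≤ g (x - y) := by
  have := hg y
  rw [← neg_sub, map_neg] at this
  linarith

theorem apply_le_norm_of_mem_subgradients (hr : LipschitzWith 1 r) (hg : g ∈ subgradients r x)
    (w : X) : g w ≤ ‖w‖ := by
  have hgw := hg (x + w)
  have hrw := hr.le_add_mul (x + w) x
  simp only [add_sub_cancel_left, NNReal.coe_one, one_mul, dist_eq_norm] at hgw hrw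
  linarith

theorem norm_le_one_of_mem_subgradients (hr : LipschitzWith 1 r) (hg : g ∈ subgradients r x) :
    ‖g‖ ≤ 1 := by
  refine g.opNorm_le_bound zero_le_one fun w => ?_
  rw [one_mul, Real.norm_eq_abs, abs_le]
  have := apply_le_norm_of_mem_subgradients hr hg (-w)
  rw [map_neg, norm_neg] at this
  exact ⟨by linarith, apply_le_norm_of_mem_subgradients hr hg w⟩

end Subgradients

theorem exists_ultrafilter_tendsto_apply {X ι : Type*} [NormedAddCommGroup X] [NormedSpace ℝ X]
    (l : Filter ι) [l.NeBot] (g : ι → X →L[ℝ] ℝ) {R : ℝ} (hg : ∀ i, ‖g i‖ ≤ R) :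
    ∃ (U : Ultrafilter ι) (g₀ : X →L[ℝ] ℝ), ↑U ≤ l ∧
      ∀ v, Tendsto (fun i => g i v) U (𝓝 (g₀ v)) := by
  let U := Ultrafilter.of l
  have hU : ↑(U.map (StrongDual.toWeakDual ∘ g)) ≤
      𝓟 (WeakDual.toStrongDual ⁻¹' Metric.closedBall (0 : X →L[ℝ] ℝ) R) :=
    le_principal_iff.2 (Ultrafilter.mem_map.2 (Eventually.of_forall fun i => by simpa using hg i))
  obtain ⟨g₀, -, hg₀⟩ := (WeakDual.isCompact_closedBall (𝕜 := ℝ) 0 R).ultrafilter_le_nhds _ hU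
  exact ⟨U, WeakDual.toStrongDual g₀, Ultrafilter.of_le l,
    fun v => ((WeakDual.eval_continuous v).tendsto g₀).comp hg₀⟩

section FarthestPoint

variable {X : Type*} [NormedAddCommGroup X] {C : Set X} {f r : X → ℝ}

theorem bddAbove_image_norm_sub_sub (hC : Bornology.IsBounded C) (hf : BddBelow (f '' C))
    (x : X) : BddAbove ((fun z => ‖x - z‖ - f z) '' C) := by
  obtain ⟨R, -, hR⟩ := hC.subset_closedBall_lt 0 x
  obtain ⟨b, hb⟩ := hf
  refine ⟨R - b, ?_⟩
  rintro - ⟨z, hz, rfl⟩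
  have hzR : ‖x - z‖ ≤ R := by simpa [dist_eq_norm, norm_sub_rev] using hR hz
  have hbz : b ≤ f z := hb ⟨z, hz, rfl⟩
  simp only
  linarith

theorem norm_sub_sub_le_of_isLUB (hr : ∀ x, IsLUB ((fun z => ‖x - z‖ - f z) '' C) (r x))
    {z : X} (hz : z ∈ C) (x : X) : ‖x - z‖ - f z ≤ r x :=
  (hr x).1 ⟨z, hz, rfl⟩

theorem lipschitzWith_one_of_isLUB (hr : ∀ x, IsLUB ((fun z => ‖x - z‖ - f z) '' C) (r x)) :
    LipschitzWith 1 r := by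
  refine LipschitzWith.of_le_add fun x y => (hr x).2 ?_
  rintro - ⟨z, hz, rfl⟩
  have := norm_sub_le_norm_sub_add_norm_sub x y z
  have := norm_sub_sub_le_of_isLUB hr hz y
  rw [dist_eq_norm]
  simp only
  linarith

end FarthestPoint

theorem csSup_eq_iff_forall_nat_exists_gt {s : Set ℝ} {b : ℝ} (hs : s.Nonempty)
    (hb : ∀ a ∈ s, a ≤ b) : sSup s = b ↔ ∀ n : ℕ, ∃ a ∈ s, b - 1 / (n + 1) < a := by
  refine ⟨fun h n => exists_lt_of_lt_csSup hs ?_,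
    fun h => csSup_eq_of_forall_le_of_forall_lt_exists_gt hs hb fun w hw => ?_⟩
  · rw [h]
    linarith [Nat.one_div_pos_of_nat (α := ℝ) (n := n)]
  obtain ⟨n, hn⟩ := exists_nat_one_div_lt (sub_pos.2 hw)
  obtain ⟨a, ha, hna⟩ := h n
  exact ⟨a, ha, by linarith⟩

section GapSet

variable {X : Type*} [NormedAddCommGroup X] [NormedSpace ℝ X] {C : Set X} {f r : X → ℝ}

def subgradientGapSet (r : X → ℝ) (C : Set X) (f : X → ℝ) (ε : ℝ) : Set X :=
  {x | ∃ g ∈ subgradients r x, ∀ z ∈ C, g (x - z) ≤ f z + r x - ε}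

theorem isClosed_subgradientGapSet (hr : LipschitzWith 1 r) (ε : ℝ) :
    IsClosed (subgradientGapSet r C f ε) := by
  refine IsSeqClosed.isClosed fun u x hu hux => ?_
  choose g hg hgC using hu
  obtain ⟨U, g₀, hU, hg₀⟩ :=
    exists_ultrafilter_tendsto_apply atTop g fun k => norm_le_one_of_mem_subgradients hr (hg k)
  have hux : Tendsto u U (𝓝 x) := hux.mono_left hU
  have hrux : Tendsto (fun k => r (u k)) U (𝓝 (r x)) := (hr.continuous.tendsto x).comp hux
  have hdist : Tendsto (fun k => ‖u k - x‖) U (𝓝 0) := tendsto_iff_norm_sub_tendsto_zero.1 hux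
  refine ⟨g₀, fun y => ?_, fun z hz => ?_⟩
  · have hlim : Tendsto (fun k => r y - r (u k) + ‖u k - x‖) U (𝓝 (r y - r x)) := by
      simpa using (tendsto_const_nhds.sub hrux).add hdist
    refine le_of_tendsto_of_tendsto' (hg₀ (y - x)) hlim fun k => ?_
    calc g k (y - x) = g k (y - u k) + g k (u k - x) := by rw [← map_add, sub_add_sub_cancel]
      _ ≤ r y - r (u k) + ‖u k - x‖ :=
        add_le_add (hg k y) (apply_le_norm_of_mem_subgradients hr (hg k) _)
  · have hlim : Tendsto (fun k => f z + r (u k) - ε + ‖u k - x‖) U (𝓝 (f z + r x - ε)) := by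
      simpa using ((tendsto_const_nhds.add hrux).sub_const ε).add hdist
    refine le_of_tendsto_of_tendsto' (hg₀ (x - z)) hlim fun k => ?_
    calc g k (x - z) = g k (u k - z) + g k (x - u k) := by rw [← map_add, sub_add_sub_cancel']
      _ ≤ f z + r (u k) - ε + ‖u k - x‖ := by
        refine add_le_add (hgC k z hz) ?_
        rw [← norm_neg, neg_sub]
        exact apply_le_norm_of_mem_subgradients hr (hg k) _

theorem setOf_forall_sSup_eq_eq_iInter_compl
    (hr : ∀ x, IsLUB ((fun z => ‖x - z‖ - f z) '' C) (r x)) (hC : C.Nonempty) :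
    {x | ∀ g ∈ subgradients r x, sSup ((fun z => g (x - z) - f z) '' C) = r x} =
      ⋂ n : ℕ, (subgradientGapSet r C f (1 / (n + 1)))ᶜ := by
  ext x
  have hsSup : ∀ g ∈ subgradients r x, (sSup ((fun z => g (x - z) - f z) '' C) = r x ↔
      ∀ n : ℕ, ∃ z ∈ C, r x - 1 / (n + 1) < g (x - z) - f z) := by
    intro g hg
    refine (csSup_eq_iff_forall_nat_exists_gt (hC.image _) ?_).trans
      (by simp only [Set.exists_mem_image])
    rintro - ⟨z, hz, rfl⟩
    have := apply_le_norm_of_mem_subgradients (lipschitzWith_one_of_isLUB hr) hg (x - z)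
    have := norm_sub_sub_le_of_isLUB hr hz x
    linarith
  simp only [Set.mem_ofPred_eq, Set.mem_iInter, Set.mem_compl_iff, subgradientGapSet]
  push Not
  constructor
  · intro h n g hg
    obtain ⟨z, hz, hlt⟩ := (hsSup g hg).1 (h g hg) n
    exact ⟨z, hz, by linarith⟩
  · intro h g hg
    refine (hsSup g hg).2 fun n => ?_
    obtain ⟨z, hz, hlt⟩ := h n g hg
    exact ⟨z, hz, by linarith⟩

theorem exists_mem_sphere_notMem_subgradientGapSet
    (hr : ∀ x, IsLUB ((fun z => ‖x - z‖ - f z) '' C) (r x)) {x z : X} (hz : z ∈ C) (hxz : x ≠ z)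
    {t δ ε : ℝ} (ht : 0 < t) (hzδ : r x - δ < ‖x - z‖ - f z)
    (hδε : δ * (‖x - z‖ + 2 * t) ≤ ε * t) :
    ∃ x' ∈ Metric.sphere x t, x' ∉ subgradientGapSet r C f ε := by
  set N := ‖x - z‖
  have hN : 0 < N := norm_pos_iff.2 (sub_ne_zero.2 hxz)
  set x' := x + (t / N) • (x - z)
  have hx'x : x' - x = (t / N) • (x - z) := add_sub_cancel_left _ _
  have hx'x_norm : ‖x' - x‖ = t := by
    rw [hx'x, norm_smul, Real.norm_of_nonneg (by positivity), div_mul_cancel₀ _ hN.ne']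
  have hx'z : t • (x' - z) = (N + t) • (x' - x) := by
    have : x' - z = (1 + t / N) • (x - z) := by rw [add_smul, one_smul, add_sub_right_comm]
    rw [this, hx'x, smul_smul, smul_smul]
    congr 1
    field_simp
  have hx'z_norm : ‖x' - z‖ = N + t := by
    have := congrArg norm hx'z
    rw [norm_smul, norm_smul, hx'x_norm, Real.norm_of_nonneg ht.le,
      Real.norm_of_nonneg (by positivity), mul_comm] at this
    exact mul_right_cancel₀ ht.ne' this
  refine ⟨x', by rw [mem_sphere_iff_norm, hx'x_norm], ?_⟩
  rintro ⟨g, hg, hgap⟩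
  have hsub : r x' - r x ≤ g (x' - x) := sub_le_apply_of_mem_subgradients hg x
  have hfar : N + t - f z ≤ r x' := hx'z_norm ▸ norm_sub_sub_le_of_isLUB hr hz x'
  have hlip : r x' ≤ r x + t := by
    simpa [dist_eq_norm, hx'x_norm] using (lipschitzWith_one_of_isLUB hr).le_add_mul x' x
  have hscale : t * g (x' - z) = (N + t) * g (x' - x) := by
    rw [← smul_eq_mul, ← map_smul, hx'z, map_smul, smul_eq_mul]
  have hslope : t - δ < g (x' - x) := by linarith
  have hgap_z : g (x' - z) < N + δ + t - ε := by linarith [hgap z hz]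
  linarith [mul_lt_mul_of_pos_left hslope (by positivity : 0 < N + t),
    mul_lt_mul_of_pos_left hgap_z ht]

theorem dense_compl_subgradientGapSet (hr : ∀ x, IsLUB ((fun z => ‖x - z‖ - f z) '' C) (r x))
    (hC : Bornology.IsBounded C) {ε : ℝ} (hε : 0 < ε) : Dense (subgradientGapSet r C f ε)ᶜ := by
  refine Metric.dense_iff.2 fun x ρ hρ => ?_
  obtain ⟨R, hR, hCR⟩ := hC.subset_closedBall_lt 0 x
  set t := ρ / 2
  have ht : 0 < t := half_pos hρ
  set δ := ε * t / (R + 2 * t)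
  have hδ : 0 < δ := by positivity
  have hδR : δ * (R + 2 * t) = ε * t := div_mul_cancel₀ _ (by positivity)
  obtain ⟨-, ⟨z, hz, rfl⟩, hzδ, -⟩ := (hr x).exists_between (sub_lt_self _ hδ)
  by_cases hxz : x = z
  · subst hxz
    refine ⟨x, Metric.mem_ball_self hρ, fun ⟨g, _, hgap⟩ => ?_⟩
    have := hgap x hz
    have hδε : δ < ε := by nlinarith
    simp only [sub_self, map_zero, norm_zero] at this hzδ
    linarith
  · have hzR : ‖x - z‖ ≤ R := by simpa [dist_eq_norm, norm_sub_rev] using hCR hz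
    obtain ⟨x', hx', hx'gap⟩ :=
      exists_mem_sphere_notMem_subgradientGapSet (ε := ε) hr hz hxz ht hzδ
        (hδR ▸ mul_le_mul_of_nonneg_left (by linarith) hδ.le)
    exact ⟨x', Metric.sphere_subset_ball (half_lt_self hρ) hx', hx'gap⟩

end GapSet

theorem stmt_1 {X : Type*} [NormedAddCommGroup X] [NormedSpace ℝ X] [CompleteSpace X]
    (C : Set X) (hCne : C.Nonempty) (hCb : Bornology.IsBounded C)
    (f : X → ℝ) (hfb : BddBelow (f '' C))
    (r : X → ℝ) (hr : ∀ x, r x = sSup ((fun z => ‖x - z‖ - f z) '' C))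
    (subdiff : X → Set (X →L[ℝ] ℝ))
    (hsubdiff : ∀ x, subdiff x = {g : X →L[ℝ] ℝ | ∀ y : X, g (y - x) ≤ r y - r x}) :
    IsGδ {x : X | ∀ g ∈ subdiff x, sSup ((fun z => g (x - z) - f z) '' C) = r x} ∧
    Dense {x : X | ∀ g ∈ subdiff x, sSup ((fun z => g (x - z) - f z) '' C) = r x} := by
  obtain rfl : subdiff = subgradients r := funext hsubdiff
  have hlub : ∀ x, IsLUB ((fun z => ‖x - z‖ - f z) '' C) (r x) := fun x =>
    hr x ▸ isLUB_csSup (hCne.image _) (bddAbove_image_norm_sub_sub hCb hfb x)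
  have hopen : ∀ n : ℕ, IsOpen (subgradientGapSet r C f (1 / (n + 1)))ᶜ := fun n =>
    (isClosed_subgradientGapSet (lipschitzWith_one_of_isLUB hlub) _).isOpen_compl
  rw [setOf_forall_sSup_eq_eq_iInter_compl hlub hCne]
  exact ⟨IsGδ.iInter fun n => (hopen n).isGδ,
    dense_iInter_of_isOpen hopen fun n => dense_compl_subgradientGapSet hlub hCb (by positivity)⟩
end

section
/- Let X be a real Banach space, C a nonempty bounded subset of X, and f : X → ℝ bounded below on C; let r(x) = sup{‖x−z‖ − f(z) : z ∈ C} and ∂r(x) = {x* ∈ X* : ∀ y ∈ X, ⟨x*, y−x⟩ ≤ r(y) − r(x)}. For every integer n ≥ 1, the set F_n = {x ∈ X : ∃ x* ∈ ∂r(x), sup{⟨x*, x−z⟩ − f(z) : z ∈ C} ≤ r(x) − 1/n} is closed in X. -/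
open Filter Topology Set

/-! Subgradients of the 1-Lipschitz function `r` lie in the dual unit ball. Given `x_k ∈ F_n` with
`x_k → x` and witnesses `g_k`, Banach–Alaoglu yields an ultrafilter along which `g_k → G` weak-*;
as the `g_k` are uniformly bounded, `g_k (v_k) → G v` whenever `v_k → v` in norm. Hence both the
subgradient inequality and the bound `g (x - z) - f z ≤ r x - 1/n` pass to the limit, and
`G` witnesses `x ∈ F_n`. -/

section Lipschitz

variable {α X : Type*} [PseudoMetricSpace X]

theorem bddAbove_image_sub_of_lipschitzWith {C : Set X} (hC : Bornology.IsBounded C)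
    {f φ : X → ℝ} (hf : BddBelow (f '' C)) {K : NNReal} (hφ : LipschitzWith K φ) :
    BddAbove ((fun z => φ z - f z) '' C) := by
  obtain ⟨a, ha⟩ := (hφ.isBounded_image hC).bddAbove
  obtain ⟨b, hb⟩ := hf
  refine ⟨a - b, ?_⟩
  rintro _ ⟨z, hz, rfl⟩
  linarith [ha (mem_image_of_mem φ hz), hb (mem_image_of_mem f hz)]

theorem lipschitzWith_sSup_image {C : Set α} (hC : C.Nonempty) {φ : α → X → ℝ} {K : NNReal}
    (hφ : ∀ z ∈ C, LipschitzWith K (φ z)) (hbdd : ∀ x, BddAbove ((fun z => φ z x) '' C)) :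
    LipschitzWith K fun x => sSup ((fun z => φ z x) '' C) := by
  refine LipschitzWith.of_le_add_mul K fun x y => csSup_le (hC.image _) ?_
  rintro _ ⟨z, hz, rfl⟩
  calc φ z x ≤ φ z y + K * dist x y := (hφ z hz).le_add_mul x y
    _ ≤ sSup ((fun z => φ z y) '' C) + K * dist x y := by
      gcongr
      exact le_csSup (hbdd y) (mem_image_of_mem _ hz)

end Lipschitz

section Normed

variable {X : Type*} [SeminormedAddCommGroup X]

theorem lipschitzWith_one_sSup_norm_sub {C : Set X} (hCne : C.Nonempty)
    (hCb : Bornology.IsBounded C) {f : X → ℝ} (hf : BddBelow (f '' C)) :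
    LipschitzWith 1 fun x => sSup ((fun z => ‖x - z‖ - f z) '' C) := by
  simp only [← dist_eq_norm]
  refine lipschitzWith_sSup_image hCne (fun z _ => ?_) fun x =>
    bddAbove_image_sub_of_lipschitzWith hCb hf (LipschitzWith.dist_right x)
  simpa using (LipschitzWith.dist_left z).sub (LipschitzWith.const (f z))

theorem ContinuousLinearMap.norm_le_of_forall_apply_sub_le [NormedSpace ℝ X] {r : X → ℝ}
    {K : NNReal} (hr : LipschitzWith K r) {x : X} {g : X →L[ℝ] ℝ}
    (hg : ∀ y, g (y - x) ≤ r y - r x) : ‖g‖ ≤ K := by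
  have hle (w : X) : g w ≤ K * ‖w‖ :=
    calc g w = g (x + w - x) := by rw [add_sub_cancel_left]
      _ ≤ r (x + w) - r x := hg (x + w)
      _ ≤ K * dist (x + w) x := by linarith [hr.le_add_mul (x + w) x]
      _ = K * ‖w‖ := by rw [dist_eq_norm, add_sub_cancel_left]
  refine g.opNorm_le_bound K.coe_nonneg fun w => abs_le.2 ⟨?_, hle w⟩
  have hneg := hle (-w)
  rw [map_neg, norm_neg] at hneg
  linarith

end Normed

section WeakStar

variable {𝕜 E ι : Type*} [NontriviallyNormedField 𝕜] [SeminormedAddCommGroup E]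
  [NormedSpace 𝕜 E]

theorem tendsto_apply_of_tendsto_of_norm_le {F : Type*} [SeminormedAddCommGroup F]
    [NormedSpace 𝕜 F] {l : Filter ι} {g : ι → E →L[𝕜] F} {G : E → F} {M : ℝ}
    (hg : ∀ i, ‖g i‖ ≤ M) (hG : ∀ w, Tendsto (fun i => g i w) l (𝓝 (G w))) {u : ι → E} {x : E}
    (hu : Tendsto u l (𝓝 x)) : Tendsto (fun i => g i (u i)) l (𝓝 (G x)) := by
  have hdiff : Tendsto (fun i => g i (u i - x)) l (𝓝 0) := by
    refine squeeze_zero_norm (fun i => ((g i).le_opNorm _).trans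
      (mul_le_mul_of_nonneg_right (hg i) (norm_nonneg _))) ?_
    simpa using (tendsto_sub_nhds_zero_iff.2 hu).norm.const_mul M
  simpa using hdiff.add (hG x)

theorem exists_ultrafilter_tendsto_apply_of_norm_le [ProperSpace 𝕜] (l : Filter ι) [l.NeBot]
    {g : ι → StrongDual 𝕜 E} {M : ℝ} (hg : ∀ i, ‖g i‖ ≤ M) :
    ∃ U : Ultrafilter ι, ↑U ≤ l ∧
      ∃ G : StrongDual 𝕜 E, ∀ w, Tendsto (fun i => g i w) U (𝓝 (G w)) := by
  obtain ⟨G, -, hG⟩ := WeakDual.isCompact_closedBall (𝕜 := 𝕜) (E := E) 0 M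
    (f := map (fun i => StrongDual.toWeakDual (g i)) l)
    (le_principal_iff.2 (mem_map.2 <| univ_mem' fun i => by simpa using hg i))
  obtain ⟨U, hUl, hUG⟩ := mapClusterPt_iff_ultrafilter.1 hG
  exact ⟨U, hUl, WeakDual.toStrongDual G,
    fun w => ((WeakDual.eval_continuous w).tendsto G).comp hUG⟩

end WeakStar

theorem stmt_2_general {X : Type*} [NormedAddCommGroup X] [NormedSpace ℝ X]
    (C : Set X) (hCne : C.Nonempty) (hCb : Bornology.IsBounded C)
    (f : X → ℝ) (hfb : BddBelow (f '' C))
    (r : X → ℝ) (hr : ∀ x, r x = sSup ((fun z => ‖x - z‖ - f z) '' C))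
    (subdiff : X → Set (X →L[ℝ] ℝ))
    (hsubdiff : ∀ x, subdiff x = {g : X →L[ℝ] ℝ | ∀ y : X, g (y - x) ≤ r y - r x})
    (n : ℕ) :
    IsClosed {x : X | ∃ g ∈ subdiff x,
      sSup ((fun z => g (x - z) - f z) '' C) ≤ r x - 1 / (n : ℝ)} := by
  have hr_lip : LipschitzWith 1 r := by
    rw [funext hr]
    exact lipschitzWith_one_sSup_norm_sub hCne hCb hfb
  simp only [hsubdiff, mem_ofPred_eq]
  refine IsSeqClosed.isClosed fun u x hu hux => ?_
  choose g hg hgC using hu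
  have hg_norm (k : ℕ) : ‖g k‖ ≤ 1 := by
    exact_mod_cast (g k).norm_le_of_forall_apply_sub_le hr_lip (hg k)
  obtain ⟨U, hU, G, hG⟩ := exists_ultrafilter_tendsto_apply_of_norm_le atTop hg_norm
  have hux' : Tendsto u U (𝓝 x) := hux.mono_left hU
  have hlim (v : X → X) (hv : Continuous v) :
      Tendsto (fun k => g k (v (u k))) U (𝓝 (G (v x))) :=
    tendsto_apply_of_tendsto_of_norm_le hg_norm hG ((hv.tendsto x).comp hux')
  have hrx : Tendsto (fun k => r (u k)) U (𝓝 (r x)) := (hr_lip.continuous.tendsto x).comp hux'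
  refine ⟨G, fun y => ?_, csSup_le (hCne.image _) ?_⟩
  · exact le_of_tendsto_of_tendsto' (hlim (y - ·) (by fun_prop)) (tendsto_const_nhds.sub hrx)
      fun k => hg k y
  · rintro _ ⟨z, hz, rfl⟩
    refine le_of_tendsto_of_tendsto' ((hlim (· - z) (by fun_prop)).sub_const (f z))
      (hrx.sub_const _) fun k => (le_csSup ?_ (mem_image_of_mem _ hz)).trans (hgC k)
    exact bddAbove_image_sub_of_lipschitzWith hCb hfb
      ((g k).lipschitz.comp ((LipschitzWith.const (u k)).sub LipschitzWith.id))

theorem stmt_2 {X : Type*} [NormedAddCommGroup X] [NormedSpace ℝ X] [CompleteSpace X]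
    (C : Set X) (hCne : C.Nonempty) (hCb : Bornology.IsBounded C)
    (f : X → ℝ) (hfb : BddBelow (f '' C))
    (r : X → ℝ) (hr : ∀ x, r x = sSup ((fun z => ‖x - z‖ - f z) '' C))
    (subdiff : X → Set (X →L[ℝ] ℝ))
    (hsubdiff : ∀ x, subdiff x = {g : X →L[ℝ] ℝ | ∀ y : X, g (y - x) ≤ r y - r x})
    (n : ℕ) (hn : 1 ≤ n) :
    IsClosed {x : X | ∃ g ∈ subdiff x,
      sSup ((fun z => g (x - z) - f z) '' C) ≤ r x - 1 / (n : ℝ)} :=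
  stmt_2_general C hCne hCb f hfb r hr subdiff hsubdiff n
end

section
/- Let X be a real Banach space, C a nonempty bounded subset of X, and f : X → ℝ bounded below on C; let r(x) = sup{‖x−z‖ − f(z) : z ∈ C} and ∂r(x) = {x* ∈ X* : ∀ y ∈ X, ⟨x*, y−x⟩ ≤ r(y) − r(x)}. For every integer n ≥ 1, the set F_n = {x ∈ X : ∃ x* ∈ ∂r(x), sup{⟨x*, x−z⟩ − f(z) : z ∈ C} ≤ r(x) − 1/n} has empty interior (hence, being closed, is nowhere dense). -/
/-! Suppose the ball `B(x, ε)` lies in `F_n`. Pick `z ∈ C` attaining `r x` up to `δ` and move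
away from it: `y = x + s • (x - z)`. Since `y - z` is a positive multiple of `y - x`, any
subgradient `g ∈ ∂r(y)` satisfies `g (y - z) = ((1 + s) / s) g (y - x) ≥ ((1 + s) / s) (r y - r x)`,
and `r y - r x ≥ s ‖x - z‖ - δ`. Hence `z` alone pushes `sup_{w ∈ C} (g (y - w) - f w)` above
`r y - δ (2 + 1 / s)`, which exceeds `r y - 1 / n` once `δ` is small compared with `s`. -/

open Set

namespace PerturbedFarthestDist

variable {X : Type*} [NormedAddCommGroup X] {C : Set X} {f : X → ℝ}

lemma bddAbove_image_apply_sub_sub (hCb : Bornology.IsBounded C) (hfb : BddBelow (f '' C))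
    {φ : X → ℝ} (hφ : ∀ v, φ v ≤ ‖v‖) (x : X) :
    BddAbove ((fun z => φ (x - z) - f z) '' C) := by
  obtain ⟨M, hM⟩ := isBounded_iff_forall_norm_le.mp hCb
  obtain ⟨m, hm⟩ := hfb
  refine ⟨‖x‖ + M - m, ?_⟩
  rintro _ ⟨z, hz, rfl⟩
  have hfz : m ≤ f z := hm (mem_image_of_mem f hz)
  linarith [hφ (x - z), norm_sub_le x z, hM z hz]

variable {r : X → ℝ} (hr : ∀ x, r x = sSup ((fun z => ‖x - z‖ - f z) '' C))
include hr

lemma norm_sub_sub_le (hCb : Bornology.IsBounded C) (hfb : BddBelow (f '' C))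
    (x : X) {z : X} (hz : z ∈ C) : ‖x - z‖ - f z ≤ r x :=
  hr x ▸ le_csSup (bddAbove_image_apply_sub_sub hCb hfb (fun _ => le_rfl) x) ⟨z, hz, rfl⟩

lemma le_add_norm_sub (hCne : C.Nonempty) (hCb : Bornology.IsBounded C)
    (hfb : BddBelow (f '' C)) (x y : X) : r y ≤ r x + ‖y - x‖ := by
  rw [hr y]
  refine csSup_le (hCne.image _) ?_
  rintro _ ⟨z, hz, rfl⟩
  linarith [norm_sub_le_norm_sub_add_norm_sub y x z, norm_sub_sub_le hr hCb hfb x hz]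

variable [NormedSpace ℝ X]

lemma apply_le_norm_of_subgradient (hCne : C.Nonempty) (hCb : Bornology.IsBounded C)
    (hfb : BddBelow (f '' C)) {y : X} {g : X →L[ℝ] ℝ} (hg : ∀ w, g (w - y) ≤ r w - r y)
    (v : X) : g v ≤ ‖v‖ := by
  have hgv := hg (y + v)
  have hrv := le_add_norm_sub hr hCne hCb hfb y (y + v)
  rw [add_sub_cancel_left] at hgv hrv
  linarith

lemma sub_lt_sSup_apply_sub_sub (hCne : C.Nonempty) (hCb : Bornology.IsBounded C)
    (hfb : BddBelow (f '' C)) {x z : X} (hz : z ∈ C) {δ s : ℝ} (hs : 0 < s)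
    (hδ : r x - δ < ‖x - z‖ - f z) {g : X →L[ℝ] ℝ}
    (hg : ∀ w, g (w - (x + s • (x - z))) ≤ r w - r (x + s • (x - z))) :
    r (x + s • (x - z)) - δ * (2 + 1 / s) <
      sSup ((fun w => g (x + s • (x - z) - w) - f w) '' C) := by
  set y := x + s • (x - z)
  set a := ‖x - z‖
  have hyz : y - z = (1 + s) • (x - z) := by simp only [y]; module
  have hxy : x - y = (-s) • (x - z) := by simp only [y]; module
  have hry_ge : (1 + s) * a - f z ≤ r y := by
    have h := norm_sub_sub_le hr hCb hfb y hz
    rwa [hyz, norm_smul, Real.norm_of_nonneg (by positivity)] at h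
  have hry_le : r y ≤ r x + s * a := by
    have h := le_add_norm_sub hr hCne hCb hfb x y
    rwa [show y - x = s • (x - z) by simp only [y]; abel, norm_smul,
      Real.norm_of_nonneg hs.le] at h
  have hgx : -s * g (x - z) ≤ r x - r y := by simpa [hxy] using hg x
  have hsc : s * a - δ < s * g (x - z) := by linarith
  have hc : a - δ / s < g (x - z) :=
    lt_of_mul_lt_mul_left (by rwa [mul_sub, mul_div_cancel₀ _ hs.ne']) hs.le
  have hgyz : (1 + s) * (a - δ / s) < g (y - z) := by
    rw [hyz, map_smul, smul_eq_mul]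
    exact mul_lt_mul_of_pos_left hc (by positivity)
  have hzle : g (y - z) - f z ≤ sSup ((fun w => g (y - w) - f w) '' C) :=
    le_csSup (bddAbove_image_apply_sub_sub hCb hfb
      (apply_le_norm_of_subgradient hr hCne hCb hfb hg) y) ⟨z, hz, rfl⟩
  have hexpand : (1 + s) * (a - δ / s) = a + s * a - δ - δ / s := by field_simp; ring
  have hδs : δ * (2 + 1 / s) = 2 * δ + δ / s := by ring
  linarith

end PerturbedFarthestDist

theorem stmt_3_general {X : Type*} [NormedAddCommGroup X] [NormedSpace ℝ X]
    (C : Set X) (hCne : C.Nonempty) (hCb : Bornology.IsBounded C)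
    (f : X → ℝ) (hfb : BddBelow (f '' C))
    (r : X → ℝ) (hr : ∀ x, r x = sSup ((fun z => ‖x - z‖ - f z) '' C))
    (subdiff : X → Set (X →L[ℝ] ℝ))
    (hsubdiff : ∀ x, subdiff x = {g : X →L[ℝ] ℝ | ∀ y : X, g (y - x) ≤ r y - r x})
    (n : ℕ) (hn : 1 ≤ n) :
    interior {x : X | ∃ g ∈ subdiff x,
      sSup ((fun z => g (x - z) - f z) '' C) ≤ r x - 1 / (n : ℝ)} = ∅ := by
  refine eq_empty_iff_forall_notMem.mpr fun x hx => ?_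
  obtain ⟨ε, hε, hball⟩ := Metric.isOpen_iff.mp isOpen_interior x hx
  obtain ⟨R, hR⟩ := (Metric.isBounded_iff_subset_closedBall x).mp hCb
  have hn' : (0 : ℝ) < n := by exact_mod_cast hn
  set s := ε / (|R| + 1)
  have hs : 0 < s := by positivity
  set δ := s / (n * (2 * s + 1))
  have hδ : δ * (2 + 1 / s) = 1 / n := by simp only [δ]; field_simp
  have hrδ : r x - δ < sSup ((fun z => ‖x - z‖ - f z) '' C) :=
    hr x ▸ sub_lt_self _ (by positivity)
  obtain ⟨_, ⟨z, hz, rfl⟩, hzδ⟩ := exists_lt_of_lt_csSup (hCne.image _) hrδ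
  have hy : x + s • (x - z) ∈ Metric.ball x ε := by
    have hxz : ‖x - z‖ ≤ |R| := by
      rw [← dist_eq_norm, dist_comm]; exact (hR hz).trans (le_abs_self R)
    rw [Metric.mem_ball, dist_eq_norm, add_sub_cancel_left, norm_smul, Real.norm_of_nonneg hs.le]
    calc s * ‖x - z‖ ≤ s * |R| := by gcongr
      _ < s * (|R| + 1) := by gcongr; linarith
      _ = ε := div_mul_cancel₀ ε (by positivity)
  obtain ⟨g, hg, hsup⟩ := interior_subset (hball hy)
  rw [hsubdiff] at hg
  have hlower := PerturbedFarthestDist.sub_lt_sSup_apply_sub_sub hr hCne hCb hfb hz hs hzδ hg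
  linarith

theorem stmt_3 {X : Type*} [NormedAddCommGroup X] [NormedSpace ℝ X] [CompleteSpace X]
    (C : Set X) (hCne : C.Nonempty) (hCb : Bornology.IsBounded C)
    (f : X → ℝ) (hfb : BddBelow (f '' C))
    (r : X → ℝ) (hr : ∀ x, r x = sSup ((fun z => ‖x - z‖ - f z) '' C))
    (subdiff : X → Set (X →L[ℝ] ℝ))
    (hsubdiff : ∀ x, subdiff x = {g : X →L[ℝ] ℝ | ∀ y : X, g (y - x) ≤ r y - r x})
    (n : ℕ) (hn : 1 ≤ n) :
    interior {x : X | ∃ g ∈ subdiff x,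
      sSup ((fun z => g (x - z) - f z) '' C) ≤ r x - 1 / (n : ℝ)} = ∅ :=
  stmt_3_general C hCne hCb f hfb r hr subdiff hsubdiff n hn
end

section
/- Let X be a real Banach space, C a nonempty weakly compact subset of X, and f : X → ℝ bounded below on C and lower semi-continuous for the weak topology on X. If x ∈ X is such that for every x* ∈ ∂r(x) one has sup{⟨x*, x−z⟩ − f(z) : z ∈ C} = r(x), then there exists z₀ ∈ C with r(x) = ‖x−z₀‖ − f(z₀); that is, G ⊆ D(C,f) where G = {x ∈ X : ∀ x* ∈ ∂r(x), sup{⟨x*, x−z⟩ − f(z) : z ∈ C} = r(x)} and D(C,f) = {x ∈ X : ∃ z ∈ C, r(x) = ‖x−z‖ − f(z)}. -/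
/-!
Weak compactness makes `C` bounded and lets the weakly lower semicontinuous `f` attain its minimum
on `C`, so `r` is a finite, convex, 1-Lipschitz function; Hahn–Banach then gives a subgradient `g`
of `r` at `x`. Since `z ↦ g (x - z) - f z` is weakly upper semicontinuous, it attains its supremum
over `C` at some `z₀`, and the hypothesis at `x` yields
`r x = g (x - z₀) - f z₀ ≤ ‖x - z₀‖ - f z₀ ≤ r x`, using `‖g‖ ≤ 1`.
-/

open Bornology

section WeakTopology

variable {𝕜 X : Type*} [RCLike 𝕜] [SeminormedAddCommGroup X] [NormedSpace 𝕜 X]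

theorem isBounded_of_forall_isBounded_image {S : Set X}
    (hS : ∀ φ : StrongDual 𝕜 X, IsBounded (φ '' S)) : IsBounded S := by
  have hpt : ∀ φ : StrongDual 𝕜 X, ∃ M, ∀ z : S,
      ‖NormedSpace.inclusionInDoubleDual 𝕜 X z φ‖ ≤ M := fun φ ↦ by
    obtain ⟨M, hM⟩ := isBounded_iff_forall_norm_le.1 (hS φ)
    exact ⟨M, fun z ↦ hM _ ⟨z, z.2, rfl⟩⟩
  obtain ⟨M, hM⟩ := banach_steinhaus hpt
  refine isBounded_iff_forall_norm_le.2 ⟨M, fun z hz ↦ ?_⟩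
  rw [← (NormedSpace.inclusionInDoubleDualLi 𝕜).norm_map z]
  exact hM ⟨z, hz⟩

theorem isBounded_of_isCompact_toWeakSpace {S : Set X}
    (hS : IsCompact (toWeakSpace 𝕜 X '' S)) : IsBounded S := by
  refine isBounded_of_forall_isBounded_image (𝕜 := 𝕜) fun φ ↦ ?_
  refine (hS.image (WeakBilin.eval_continuous _ φ)).isBounded.subset ?_
  rintro _ ⟨z, hz, rfl⟩
  exact ⟨toWeakSpace 𝕜 X z, ⟨z, hz, rfl⟩, rfl⟩

theorem exists_isMinOn_of_isCompact_toWeakSpace {S : Set X} (hne : S.Nonempty)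
    (hS : IsCompact (toWeakSpace 𝕜 X '' S)) {f : X → ℝ}
    (hf : LowerSemicontinuous (f ∘ (toWeakSpace 𝕜 X).symm)) :
    ∃ z ∈ S, IsMinOn f S z := by
  obtain ⟨w, ⟨z, hz, rfl⟩, hmin⟩ := (hf.lowerSemicontinuousOn _).exists_isMinOn (hne.image _) hS
  refine ⟨z, hz, fun y hy ↦ ?_⟩
  simpa using hmin ⟨y, hy, rfl⟩

end WeakTopology

noncomputable def perturbedFarthestDist {X : Type*} [SeminormedAddCommGroup X] (C : Set X)
    (f : X → ℝ) (x : X) : ℝ :=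
  sSup ((fun z ↦ ‖x - z‖ - f z) '' C)

section perturbedFarthestDist

variable {X : Type*} [SeminormedAddCommGroup X] {C : Set X} {f : X → ℝ}

theorem bddAbove_norm_sub_sub_image (hC : IsBounded C) (hf : BddBelow (f '' C)) (x : X) :
    BddAbove ((fun z ↦ ‖x - z‖ - f z) '' C) := by
  obtain ⟨M, hM⟩ := isBounded_iff_forall_norm_le.1 hC
  obtain ⟨m, hm⟩ := hf
  refine ⟨‖x‖ + M - m, ?_⟩
  rintro _ ⟨z, hz, rfl⟩
  have := hm ⟨z, hz, rfl⟩
  linarith [norm_sub_le x z, hM z hz]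

theorem norm_sub_sub_le_perturbedFarthestDist (hC : IsBounded C) (hf : BddBelow (f '' C))
    {x z : X} (hz : z ∈ C) :
    ‖x - z‖ - f z ≤ perturbedFarthestDist C f x :=
  le_csSup (bddAbove_norm_sub_sub_image hC hf x) ⟨z, hz, rfl⟩

theorem perturbedFarthestDist_le (hne : C.Nonempty) {x : X} {b : ℝ}
    (h : ∀ z ∈ C, ‖x - z‖ - f z ≤ b) :
    perturbedFarthestDist C f x ≤ b :=
  csSup_le (hne.image _) (Set.forall_mem_image.2 h)

theorem lipschitzWith_one_perturbedFarthestDist (hne : C.Nonempty) (hC : IsBounded C)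
    (hf : BddBelow (f '' C)) : LipschitzWith 1 (perturbedFarthestDist C f) := by
  refine LipschitzWith.of_le_add fun x y ↦ perturbedFarthestDist_le hne fun z hz ↦ ?_
  have := norm_sub_sub_le_perturbedFarthestDist hC hf (x := y) hz
  linarith [norm_sub_le_norm_sub_add_norm_sub x y z, dist_eq_norm x y]

theorem convexOn_perturbedFarthestDist [NormedSpace ℝ X] (hne : C.Nonempty) (hC : IsBounded C)
    (hf : BddBelow (f '' C)) : ConvexOn ℝ Set.univ (perturbedFarthestDist C f) := by
  refine ⟨convex_univ, fun x _ y _ a b ha hb hab ↦ perturbedFarthestDist_le hne fun z hz ↦ ?_⟩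
  have hx := norm_sub_sub_le_perturbedFarthestDist hC hf (x := x) hz
  have hy := norm_sub_sub_le_perturbedFarthestDist hC hf (x := y) hz
  calc ‖a • x + b • y - z‖ - f z = ‖a • (x - z) + b • (y - z)‖ - (a + b) * f z := by
        rw [hab, one_mul, smul_sub, smul_sub, sub_add_sub_comm, ← add_smul, hab, one_smul]
    _ ≤ a * ‖x - z‖ + b * ‖y - z‖ - (a + b) * f z := by
        grw [norm_add_le, norm_smul, norm_smul, Real.norm_of_nonneg ha, Real.norm_of_nonneg hb]
    _ = a * (‖x - z‖ - f z) + b * (‖y - z‖ - f z) := by ring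
    _ ≤ a * perturbedFarthestDist C f x + b * perturbedFarthestDist C f y := by gcongr

end perturbedFarthestDist

theorem ConvexOn.exists_subgradient {E : Type*} [TopologicalSpace E] [AddCommGroup E]
    [IsTopologicalAddGroup E] [Module ℝ E] [ContinuousSMul ℝ E] {φ : E → ℝ}
    (hφ : ConvexOn ℝ Set.univ φ) (hφc : Continuous φ) (x : E) :
    ∃ g : E →L[ℝ] ℝ, ∀ y, g (y - x) ≤ φ y - φ x := by
  have hopen : IsOpen {p : E × ℝ | φ p.1 < p.2} :=
    isOpen_lt (hφc.comp continuous_fst) continuous_snd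
  have hconv : Convex ℝ {p : E × ℝ | φ p.1 < p.2} := by
    simpa using hφ.convex_strict_epigraph
  -- Separate `(x, φ x)` from the open strict epigraph; the functional has negative vertical part
  -- `c`, and rescaling its horizontal part `ψ` by `(-c)⁻¹` gives the subgradient.
  obtain ⟨F, hF⟩ :=
    geometric_hahn_banach_open_point hconv hopen (x := (x, φ x)) (lt_irrefl (φ x))
  set c := F (0, 1)
  set ψ := F.comp (ContinuousLinearMap.inl ℝ E ℝ)
  have hF_apply : ∀ y s, F (y, s) = ψ y + s * c := fun y s ↦ by
    rw [show ((y, s) : E × ℝ) = (y, 0) + s • (0, 1) by simp, map_add, map_smul, smul_eq_mul]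
    rfl
  have hc : c < 0 := by
    have := hF (x, φ x + 1) (by simp)
    rw [hF_apply, hF_apply] at this
    linarith
  have hsupp : ∀ y, ψ y + φ y * c ≤ ψ x + φ x * c := fun y ↦ by
    refine le_of_forall_pos_lt_add fun ε hε ↦ ?_
    have := hF (y, φ y + ε / -c) (by simpa using div_pos hε (neg_pos.2 hc))
    have hεc : ε / -c * c = -ε := by field_simp [hc.ne]
    rw [hF_apply, hF_apply, add_mul, hεc] at this
    linarith
  refine ⟨(-c)⁻¹ • ψ, fun y ↦ ?_⟩
  rw [smul_apply, map_sub, smul_eq_mul, inv_mul_le_iff₀ (neg_pos.2 hc)]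
  linarith [hsupp y]

theorem LipschitzWith.subgradient_le {E : Type*} [SeminormedAddCommGroup E]
    {φ : E → ℝ} {K : NNReal} (hφ : LipschitzWith K φ) {g : E → ℝ} {x : E}
    (hg : ∀ y, g (y - x) ≤ φ y - φ x) (v : E) : g v ≤ K * ‖v‖ := by
  have h := hg (x + v)
  rw [add_sub_cancel_left] at h
  calc g v ≤ φ (x + v) - φ x := h
    _ ≤ dist (φ (x + v)) (φ x) := le_abs_self _
    _ ≤ K * dist (x + v) x := hφ.dist_le_mul _ _
    _ = K * ‖v‖ := by rw [dist_eq_norm, add_sub_cancel_left]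

theorem stmt_4_general {X : Type*} [NormedAddCommGroup X] [NormedSpace ℝ X]
    (C : Set X) (hCne : C.Nonempty)
    (hCw : IsCompact (toWeakSpace ℝ X '' C))
    (f : X → ℝ)
    (hflsc : LowerSemicontinuous (fun x : WeakSpace ℝ X => f ((toWeakSpace ℝ X).symm x)))
    (r : X → ℝ) (hr : ∀ x, r x = sSup ((fun z => ‖x - z‖ - f z) '' C))
    (subdiff : X → Set (X →L[ℝ] ℝ))
    (hsubdiff : ∀ x, subdiff x = {g : X →L[ℝ] ℝ | ∀ y : X, g (y - x) ≤ r y - r x})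
    (x : X) (hx : ∀ g ∈ subdiff x, sSup ((fun z => g (x - z) - f z) '' C) = r x) :
    ∃ z₀ ∈ C, r x = ‖x - z₀‖ - f z₀ := by
  obtain rfl : r = perturbedFarthestDist C f := funext hr
  have hCb : IsBounded C := isBounded_of_isCompact_toWeakSpace hCw
  have hfb : BddBelow (f '' C) := by
    obtain ⟨_, -, hmin⟩ := exists_isMinOn_of_isCompact_toWeakSpace hCne hCw hflsc
    exact hmin.bddBelow
  have hlip := lipschitzWith_one_perturbedFarthestDist hCne hCb hfb
  obtain ⟨g, hg⟩ :=
    (convexOn_perturbedFarthestDist hCne hCb hfb).exists_subgradient hlip.continuous x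
  obtain ⟨z₀, hz₀, hmin⟩ := exists_isMinOn_of_isCompact_toWeakSpace (f := fun z ↦ f z + g z)
    hCne hCw (hflsc.add (WeakBilin.eval_continuous _ g).lowerSemicontinuous)
  have hsup : sSup ((fun z ↦ g (x - z) - f z) '' C) = g (x - z₀) - f z₀ := by
    refine IsGreatest.csSup_eq ⟨⟨z₀, hz₀, rfl⟩, ?_⟩
    rintro _ ⟨z, hz, rfl⟩
    have : f z₀ + g z₀ ≤ f z + g z := hmin hz
    simp only [map_sub]
    linarith
  refine ⟨z₀, hz₀, le_antisymm ?_ (norm_sub_sub_le_perturbedFarthestDist hCb hfb hz₀)⟩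
  calc perturbedFarthestDist C f x = g (x - z₀) - f z₀ := by
        rw [← hx g (by rw [hsubdiff]; exact hg), hsup]
    _ ≤ ‖x - z₀‖ - f z₀ := by
        have := hlip.subgradient_le hg (x - z₀)
        simp only [NNReal.coe_one, one_mul] at this
        linarith

theorem stmt_4 {X : Type*} [NormedAddCommGroup X] [NormedSpace ℝ X] [CompleteSpace X]
    (C : Set X) (hCne : C.Nonempty)
    (hCw : IsCompact (toWeakSpace ℝ X '' C))
    (f : X → ℝ) (hfb : BddBelow (f '' C))
    (hflsc : LowerSemicontinuous (fun x : WeakSpace ℝ X => f ((toWeakSpace ℝ X).symm x)))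
    (r : X → ℝ) (hr : ∀ x, r x = sSup ((fun z => ‖x - z‖ - f z) '' C))
    (subdiff : X → Set (X →L[ℝ] ℝ))
    (hsubdiff : ∀ x, subdiff x = {g : X →L[ℝ] ℝ | ∀ y : X, g (y - x) ≤ r y - r x})
    (x : X) (hx : ∀ g ∈ subdiff x, sSup ((fun z => g (x - z) - f z) '' C) = r x) :
    ∃ z₀ ∈ C, r x = ‖x - z₀‖ - f z₀ :=
  stmt_4_general C hCne hCw f hflsc r hr subdiff hsubdiff x hx
end

section
/- Let X be a real Banach space and C a nonempty weakly compact subset of X. Then the set of points x ∈ X such that the function z ↦ ‖x−z‖ − ‖z‖ attains its supremum on C is dense in X. -/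
/-
Starting from `x₀`, repeatedly move a short distance `t k` straight away (in direction `u k`) from
a near-maximiser `z k` of `z ↦ ‖x k - z‖ - ‖z‖`. The steps are summable, so `x k → a` close to `x₀`.
Each step raises the supremum by almost `t k`, so a functional of norm `≤ 1` norming `x N - z N`
almost norms every earlier direction `u m`; a weak-* cluster point `φ` of these functionals does too, which
gives `sup ≤ φ (a - z n) - ‖z n‖ + o(1)`. Unlike `z ↦ ‖a - z‖ - ‖z‖`, the function
`z ↦ φ (a - z) - ‖z‖` is weakly upper semicontinuous, so a weak cluster point of `z n` in `C`
attains the supremum at `a`.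
-/

open Filter Topology Metric Set Bornology

lemma IsCompact.exists_mem_forall_mem_of_eventually {α β ι : Type*} [TopologicalSpace α]
    {K : Set α} (hK : IsCompact K) {l : Filter β} [l.NeBot] {w : β → α} (hw : ∀ n, w n ∈ K)
    {S : ι → Set α} (hS : ∀ i, IsClosed (S i)) (hev : ∀ i, ∀ᶠ n in l, w n ∈ S i) :
    ∃ a ∈ K, ∀ i, a ∈ S i := by
  obtain ⟨a, haK, ha⟩ := hK.exists_clusterPt (f := map w l)
    (le_principal_iff.2 (mem_map.2 (Eventually.of_forall hw)))
  exact ⟨a, haK, fun i => (hS i).closure_subset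
    (mem_closure_iff_clusterPt.2 (ha.mono (le_principal_iff.2 (mem_map.2 (hev i)))))⟩

section gapSup

variable {X : Type*} [NormedAddCommGroup X]

noncomputable def gapSup (C : Set X) (y : X) : ℝ := sSup ((fun z => ‖y - z‖ - ‖z‖) '' C)

variable {C : Set X}

lemma gap_le_gapSup {y z : X} (hz : z ∈ C) : ‖y - z‖ - ‖z‖ ≤ gapSup C y := by
  refine le_csSup ⟨‖y‖, ?_⟩ (mem_image_of_mem _ hz)
  rintro _ ⟨w, -, rfl⟩
  linarith [norm_sub_le y w]

lemma gapSup_le_add_norm_sub (hC : C.Nonempty) (a b : X) : gapSup C a ≤ gapSup C b + ‖a - b‖ := by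
  refine csSup_le (hC.image _) ?_
  rintro _ ⟨z, hz, rfl⟩
  have := gap_le_gapSup (y := b) hz
  linarith [norm_sub_le_norm_sub_add_norm_sub a b z]

lemma exists_gapSup_lt (hC : C.Nonempty) (y : X) {δ : ℝ} (hδ : 0 < δ) :
    ∃ z ∈ C, gapSup C y < ‖y - z‖ - ‖z‖ + δ := by
  obtain ⟨_, ⟨z, hz, rfl⟩, hlt⟩ := exists_lt_of_lt_csSup (hC.image _) (sub_lt_self (gapSup C y) hδ)
  exact ⟨z, hz, by linarith⟩

end gapSup

section

variable {X : Type*} [NormedAddCommGroup X] [NormedSpace ℝ X]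

lemma Convex.isClosed_image_toWeakSpace {s : Set X} (hs : Convex ℝ s) (hc : IsClosed s) :
    IsClosed (toWeakSpace ℝ X '' s) := by
  rw [← hc.closure_eq, hs.toWeakSpace_closure ℝ]
  exact isClosed_closure

lemma isBounded_of_isCompact_image_toWeakSpace {C : Set X}
    (hC : IsCompact (toWeakSpace ℝ X '' C)) : IsBounded C := by
  have hK := (hC.image (NormedSpace.inclusionInDoubleDualWeak ℝ X).continuous).isVonNBounded ℝ
  rw [← WeakDual.isBounded_iff_isVonNBounded,
    ← WeakDual.isBounded_toWeakDual_preimage_iff_isBounded, isBounded_iff_forall_norm_le] at hK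
  obtain ⟨M, hM⟩ := hK
  refine isBounded_iff_forall_norm_le.2 ⟨M, fun z hz => ?_⟩
  rw [← (NormedSpace.inclusionInDoubleDualLi ℝ (E := X)).norm_map z]
  exact hM _ ⟨toWeakSpace ℝ X z, mem_image_of_mem _ hz, rfl⟩

lemma ContinuousLinearMap.apply_le_norm_of_norm_le_one {g : StrongDual ℝ X} (hg : ‖g‖ ≤ 1)
    (y : X) : g y ≤ ‖y‖ :=
  (le_abs_self _).trans (by simpa using g.le_of_opNorm_le hg y)

lemma exists_norm_le_one_forall_le_of_eventually {ι : Type*} {u : ι → X} {c : ι → ℝ}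
    {g : ℕ → StrongDual ℝ X} (hg : ∀ N, ‖g N‖ ≤ 1) (h : ∀ i, ∀ᶠ N in atTop, c i ≤ g N (u i)) :
    ∃ φ : StrongDual ℝ X, ‖φ‖ ≤ 1 ∧ ∀ i, c i ≤ φ (u i) := by
  obtain ⟨φ, hφ, hφu⟩ := (WeakDual.isCompact_closedBall 0 1).exists_mem_forall_mem_of_eventually
    (w := fun N => StrongDual.toWeakDual (g N)) (by simpa using hg)
    (S := fun i => {ψ : WeakDual ℝ X | c i ≤ ψ (u i)})
    (fun i => isClosed_le continuous_const (WeakDual.eval_continuous (u i))) h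
  exact ⟨WeakDual.toStrongDual φ, by simpa using hφ, hφu⟩

lemma exists_norm_eq_one_smul_eq [Nontrivial X] (y : X) : ∃ u : X, ‖u‖ = 1 ∧ y = ‖y‖ • u := by
  rcases eq_or_ne y 0 with rfl | hy
  · obtain ⟨u, hu⟩ := exists_norm_eq X zero_le_one
    exact ⟨u, hu, by simp⟩
  · exact ⟨‖y‖⁻¹ • y, by simp [norm_smul, hy], by simp [smul_smul, hy]⟩

/-- The tolerances are written as `e k - e (k + 1)` so that they telescope. -/
structure IsGreedyAscent (C : Set X) (t e : ℕ → ℝ) (x z u : ℕ → X) : Prop where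
  succ : ∀ k, x (k + 1) = x k + t k • u k
  mem : ∀ k, z k ∈ C
  gapSup_le : ∀ k, gapSup C (x k) ≤ ‖x k - z k‖ - ‖z k‖ + (e k - e (k + 1))
  norm_u : ∀ k, ‖u k‖ = 1
  sub_eq : ∀ k, x k - z k = ‖x k - z k‖ • u k

namespace IsGreedyAscent

variable {C : Set X} {t e : ℕ → ℝ} {x z u : ℕ → X}

lemma dist_succ (hA : IsGreedyAscent C t e x z u) {k : ℕ} (ht : 0 ≤ t k) :
    dist (x k) (x (k + 1)) = t k := by
  rw [hA.succ, dist_self_add_right, norm_smul, hA.norm_u, mul_one, Real.norm_of_nonneg ht]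

lemma gapSup_add_le (hA : IsGreedyAscent C t e x z u) {k : ℕ} (ht : 0 ≤ t k) :
    gapSup C (x k) + t k - (e k - e (k + 1)) ≤ gapSup C (x (k + 1)) := by
  have hsub : x (k + 1) - z k = (‖x k - z k‖ + t k) • u k := by
    rw [hA.succ, add_smul, ← hA.sub_eq]; abel
  have hnorm : ‖x (k + 1) - z k‖ = ‖x k - z k‖ + t k := by
    rw [hsub, norm_smul, hA.norm_u, mul_one, Real.norm_of_nonneg (by positivity)]
  have := gap_le_gapSup (y := x (k + 1)) (hA.mem k)
  linarith [hA.gapSup_le k]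

lemma mul_one_sub_le_potential_succ (hA : IsGreedyAscent C t e x z u) {g : StrongDual ℝ X}
    {k : ℕ} (ht : 0 ≤ t k) :
    t k * (1 - g (u k)) ≤
      (gapSup C (x (k + 1)) - g (x (k + 1)) - e (k + 1)) - (gapSup C (x k) - g (x k) - e k) := by
  have hg : g (x (k + 1)) = g (x k) + t k * g (u k) := by
    rw [hA.succ, map_add, map_smul, smul_eq_mul]
  linarith [hA.gapSup_add_le ht]

lemma monotone_potential (hA : IsGreedyAscent C t e x z u) (ht : ∀ k, 0 ≤ t k)
    {g : StrongDual ℝ X} (hg : ‖g‖ ≤ 1) :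
    Monotone fun k => gapSup C (x k) - g (x k) - e k := by
  refine monotone_nat_of_le_succ fun k => ?_
  have h1 := hA.mul_one_sub_le_potential_succ (g := g) (ht k)
  have h2 : g (u k) ≤ 1 := (g.apply_le_norm_of_norm_le_one hg _).trans (hA.norm_u k).le
  nlinarith [ht k]

lemma mul_one_sub_le (hA : IsGreedyAscent C t e x z u) (ht : ∀ k, 0 ≤ t k) (he : ∀ k, 0 ≤ e k)
    {g : StrongDual ℝ X} (hg : ‖g‖ ≤ 1) {m N : ℕ} (hgN : g (x N - z N) = ‖x N - z N‖)
    (hmN : m < N) : t m * (1 - g (u m)) ≤ e m := by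
  -- The potential rises by at least `t m * (1 - g (u m))` at step `m`, but by at most
  -- `e m` in total from `m` to `N`, because `g` norms `x N - z N`.
  have hstep := hA.mul_one_sub_le_potential_succ (g := g) (ht m)
  have hmono := hA.monotone_potential ht hg (Nat.succ_le_of_lt hmN)
  have hN : gapSup C (x N) - g (x N) ≤ -g (z N) - ‖z N‖ + (e N - e (N + 1)) := by
    rw [← sub_add_cancel (x N) (z N), map_add, sub_add_cancel, hgN]
    linarith [hA.gapSup_le N]
  have hm : g (x m) - g (z N) - ‖z N‖ ≤ gapSup C (x m) := by
    rw [← map_sub]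
    exact le_trans (by linarith [g.apply_le_norm_of_norm_le_one hg (x m - z N)])
      (gap_le_gapSup (hA.mem N))
  simp only at hmono
  linarith [he (N + 1)]

lemma exists_dual_mul_one_sub_le (hA : IsGreedyAscent C t e x z u) (ht : ∀ k, 0 ≤ t k)
    (he : ∀ k, 0 ≤ e k) : ∃ φ : StrongDual ℝ X, ‖φ‖ ≤ 1 ∧ ∀ m, t m * (1 - φ (u m)) ≤ e m := by
  choose g hg hgx using fun N => exists_dual_vector'' ℝ (x N - z N)
  obtain ⟨φ, hφ, hφu⟩ := exists_norm_le_one_forall_le_of_eventually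
    (u := fun m => t m • u m) (c := fun m => t m - e m) hg fun m =>
    (eventually_gt_atTop m).mono fun N hmN => by
      have := hA.mul_one_sub_le ht he (hg N) (by simpa using hgx N) hmN
      simp only [map_smul, smul_eq_mul]
      linarith
  refine ⟨φ, hφ, fun m => ?_⟩
  have := hφu m
  simp only [map_smul, smul_eq_mul] at this
  linarith

end IsGreedyAscent

lemma exists_isGreedyAscent [Nontrivial X] {C : Set X} (hC : C.Nonempty) (t : ℕ → ℝ)
    {e : ℕ → ℝ} (he : StrictAnti e) (x₀ : X) :
    ∃ x z u : ℕ → X, x 0 = x₀ ∧ IsGreedyAscent C t e x z u := by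
  have step (k : ℕ) (y : X) : ∃ z ∈ C, ∃ u : X,
      gapSup C y ≤ ‖y - z‖ - ‖z‖ + (e k - e (k + 1)) ∧ ‖u‖ = 1 ∧ y - z = ‖y - z‖ • u := by
    obtain ⟨z, hz, hlt⟩ := exists_gapSup_lt hC y (sub_pos.2 (he (Nat.lt_succ_self k)))
    obtain ⟨u, hu, hyz⟩ := exists_norm_eq_one_smul_eq (y - z)
    exact ⟨z, hz, u, hlt.le, hu, hyz⟩
  choose Z hZ U hgap hU hsub using step
  let x : ℕ → X := fun k => Nat.rec x₀ (fun k y => y + t k • U k y) k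
  exact ⟨x, fun k => Z k (x k), fun k => U k (x k), rfl,
    ⟨fun k => rfl, fun k => hZ k _, fun k => hgap k _, fun k => hU k _, fun k => hsub k _⟩⟩

lemma gapSup_sub_le {C : Set X} (hC : C.Nonempty) {a y z u : X} {φ : StrongDual ℝ X}
    (hφ : ‖φ‖ ≤ 1) {δ γ B : ℝ} (hz : gapSup C y ≤ ‖y - z‖ - ‖z‖ + δ)
    (hu : y - z = ‖y - z‖ • u) (hφu : 1 - γ ≤ φ u) (hγ : 0 ≤ γ) (hB : ‖y - z‖ ≤ B) :
    gapSup C a - (2 * dist y a + δ + B * γ) ≤ φ (a - z) - ‖z‖ := by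
  have hsplit : φ (a - z) = ‖y - z‖ * φ u - φ (y - a) := by
    rw [← smul_eq_mul, ← map_smul, ← hu, ← map_sub]; congr 1; abel
  have hya := φ.apply_le_norm_of_norm_le_one hφ (y - a)
  have hBγ : ‖y - z‖ * (1 - γ) ≤ ‖y - z‖ * φ u := mul_le_mul_of_nonneg_left hφu (norm_nonneg _)
  have := gapSup_le_add_norm_sub hC a y
  rw [dist_eq_norm]
  rw [norm_sub_rev] at this
  nlinarith

lemma exists_gapSup_eq_of_approx {C : Set X} (hCw : IsCompact (toWeakSpace ℝ X '' C)) {a : X}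
    {φ : StrongDual ℝ X} (hφ : ‖φ‖ ≤ 1) {z : ℕ → X} (hz : ∀ n, z n ∈ C) {ρ : ℕ → ℝ}
    (hρ : Tendsto ρ atTop (𝓝 0)) (h : ∀ n, gapSup C a - ρ n ≤ φ (a - z n) - ‖z n‖) :
    ∃ z₀ ∈ C, ‖a - z₀‖ - ‖z₀‖ = gapSup C a := by
  let S (η : {η : ℝ // 0 < η}) : Set X := {y | φ y + ‖y‖ ≤ φ a - gapSup C a + η}
  have hS (η) : IsClosed (toWeakSpace ℝ X '' S η) := by
    refine Convex.isClosed_image_toWeakSpace ?_ (isClosed_le (by fun_prop) continuous_const)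
    simpa only [sep_univ, Pi.add_apply, ContinuousLinearMap.coe_coe] using
      ((φ.toLinearMap.convexOn convex_univ).add (convexOn_norm convex_univ)).convex_le _
  have hev (η : {η : ℝ // 0 < η}) :
      ∀ᶠ n in atTop, toWeakSpace ℝ X (z n) ∈ toWeakSpace ℝ X '' S η := by
    filter_upwards [hρ.eventually (gt_mem_nhds η.2)] with n hn
    refine mem_image_of_mem _ ?_
    have := h n
    simp only [S, mem_ofPred_eq, map_sub] at this ⊢
    linarith
  obtain ⟨_, ⟨z₀, hz₀, rfl⟩, hz₀S⟩ :=
    hCw.exists_mem_forall_mem_of_eventually (fun n => mem_image_of_mem _ (hz n)) hS hev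
  have hz₀S (η : ℝ) (hη : 0 < η) : φ z₀ + ‖z₀‖ ≤ φ a - gapSup C a + η :=
    (toWeakSpace ℝ X).injective.mem_set_image.1 (hz₀S ⟨η, hη⟩)
  have hle := le_of_forall_pos_le_add hz₀S
  refine ⟨z₀, hz₀, le_antisymm (gap_le_gapSup hz₀) ?_⟩
  have := φ.apply_le_norm_of_norm_le_one hφ (a - z₀)
  rw [map_sub] at this
  linarith

lemma IsGreedyAscent.exists_gapSup_eq_of_tendsto {C : Set X} {t e : ℕ → ℝ} {x z u : ℕ → X}
    (hA : IsGreedyAscent C t e x z u) (hC : C.Nonempty) (hCw : IsCompact (toWeakSpace ℝ X '' C))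
    {a : X} (hxa : Tendsto x atTop (𝓝 a)) (he : Tendsto e atTop (𝓝 0)) {φ : StrongDual ℝ X}
    (hφ : ‖φ‖ ≤ 1) {γ : ℕ → ℝ} (hγ₀ : ∀ n, 0 ≤ γ n) (hγ : Tendsto γ atTop (𝓝 0))
    (hφu : ∀ n, 1 - γ n ≤ φ (u n)) : ∃ z₀ ∈ C, ‖a - z₀‖ - ‖z₀‖ = gapSup C a := by
  obtain ⟨R₁, hR₁⟩ := (isBounded_range_of_tendsto x hxa).exists_norm_le
  obtain ⟨R₂, hR₂⟩ := (isBounded_of_isCompact_image_toWeakSpace hCw).exists_norm_le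
  refine exists_gapSup_eq_of_approx hCw hφ hA.mem
    (ρ := fun n => 2 * dist (x n) a + (e n - e (n + 1)) + (R₁ + R₂) * γ n) ?_ fun n =>
    gapSup_sub_le hC hφ (hA.gapSup_le n) (hA.sub_eq n) (hφu n) (hγ₀ n) ?_
  · have hx : Tendsto (fun n => dist (x n) a) atTop (𝓝 0) := tendsto_iff_dist_tendsto_zero.1 hxa
    simpa using ((hx.const_mul 2).add (he.sub (he.comp (tendsto_add_atTop_nat 1)))).add
      (hγ.const_mul (R₁ + R₂))
  · exact (norm_sub_le _ _).trans (add_le_add (hR₁ _ (mem_range_self n)) (hR₂ _ (hA.mem n)))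

theorem exists_gapSup_eq_near [Nontrivial X] [CompleteSpace X] {C : Set X} (hC : C.Nonempty)
    (hCw : IsCompact (toWeakSpace ℝ X '' C)) (x₀ : X) {ε : ℝ} (hε : 0 < ε) :
    ∃ a, dist x₀ a ≤ 2 * ε ∧ ∃ z₀ ∈ C, ‖a - z₀‖ - ‖z₀‖ = gapSup C a := by
  set t : ℕ → ℝ := fun k => ε * (1 / 2) ^ k
  set e : ℕ → ℝ := fun k => ε * (1 / 4) ^ k
  have ht (k : ℕ) : 0 ≤ t k := by positivity
  have he : StrictAnti e := fun m n hmn => mul_lt_mul_of_pos_left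
    (pow_lt_pow_right_of_lt_one₀ (by norm_num) (by norm_num) hmn) hε
  obtain ⟨x, z, u, rfl, hA⟩ := exists_isGreedyAscent hC t he x₀
  have hstep (k : ℕ) : dist (x k) (x (k + 1)) ≤ ε * (1 / 2) ^ k := (hA.dist_succ (ht k)).le
  obtain ⟨a, hxa⟩ :=
    cauchySeq_tendsto_of_complete (cauchySeq_of_le_geometric _ _ (by norm_num) hstep)
  have hdist : dist (x 0) a ≤ 2 * ε := by
    have := dist_le_of_le_geometric_of_tendsto₀ _ _ (by norm_num) hstep hxa
    norm_num at this
    linarith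
  have he_nonneg (k : ℕ) : 0 ≤ e k := by positivity
  have het (k : ℕ) : e k = t k * (1 / 2) ^ k := by
    simp only [t, e]; rw [mul_assoc, ← mul_pow]; norm_num
  obtain ⟨φ, hφ, hφt⟩ := hA.exists_dual_mul_one_sub_le ht he_nonneg
  have hφu (m : ℕ) : 1 - (1 / 2) ^ m ≤ φ (u m) := by
    have := hφt m
    rw [het] at this
    linarith [le_of_mul_le_mul_left this (by positivity : 0 < t m)]
  refine ⟨a, hdist, hA.exists_gapSup_eq_of_tendsto hC hCw hxa ?_ hφ
    (fun n => by positivity) (tendsto_pow_atTop_nhds_zero_of_lt_one (by norm_num) (by norm_num))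
    hφu⟩
  simpa only [mul_zero] using (tendsto_pow_atTop_nhds_zero_of_lt_one
    (r := (1 / 4 : ℝ)) (by norm_num) (by norm_num)).const_mul ε

end

theorem stmt_5 {X : Type*} [NormedAddCommGroup X] [NormedSpace ℝ X] [CompleteSpace X]
    (C : Set X) (hCne : C.Nonempty)
    (hCw : IsCompact (toWeakSpace ℝ X '' C)) :
    Dense {x : X | ∃ z₀ ∈ C,
      ‖x - z₀‖ - ‖z₀‖ = sSup ((fun z => ‖x - z‖ - ‖z‖) '' C)} := by
  rcases subsingleton_or_nontrivial X with hX | hX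
  · obtain ⟨z₀, hz₀⟩ := hCne
    convert dense_univ
    refine eq_univ_of_forall fun x => ⟨z₀, hz₀, ?_⟩
    simp [Subsingleton.elim _ (0 : X), Set.Nonempty.image_const ⟨z₀, hz₀⟩]
  · refine Metric.dense_iff.2 fun x₀ r hr => ?_
    obtain ⟨a, ha, z₀, hz₀, heq⟩ := exists_gapSup_eq_near hCne hCw x₀ (ε := r / 4) (by positivity)
    exact ⟨a, mem_ball'.2 (by linarith), z₀, hz₀, heq⟩
end

section
/- Let C = [0,1] ⊆ ℝ and for each integer k ≥ 1 define f_k : ℝ → ℝ by f_k(z) = 1/k if z ∈ {0,1} and f_k(z) = 0 otherwise. Then the sequence (f_k) converges uniformly to 0 on ℝ, and yet for every k ≥ 1 and every x ∈ ℝ the function z ↦ |x−z| − f_k(z) does not attain its supremum on [0,1]; that is, D([0,1], f_k) = ∅ for all k ≥ 1, while D([0,1], 0) = ℝ. -/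
/-! The function `w ↦ |x - w|` is maximised on `[0,1]` only at the endpoints, with maximum
`max |x| |x - 1|`, and it comes arbitrarily close to that value in the interior. Lowering its
values at the two endpoints by `1/k` and nowhere else therefore leaves the supremum unchanged
but removes every point where it was attained. -/

open Filter Set Topology

lemma tendstoUniformly_zero_of_norm_le {ι α E : Type*} [NormedAddCommGroup E] {F : ι → α → E}
    {u : ι → ℝ} {l : Filter ι} (hu : Tendsto u l (𝓝 0)) (hF : ∀ i x, ‖F i x‖ ≤ u i) :
    TendstoUniformly F (fun _ => 0) l := by
  rw [Metric.tendstoUniformly_iff]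
  intro ε hε
  filter_upwards [hu.eventually (gt_mem_nhds hε)] with i hi x
  rw [dist_zero_left]
  exact (hF i x).trans_lt hi

section DistanceOnInterval

variable {a b x w : ℝ}

lemma abs_sub_le_max_of_mem_Icc (hw : w ∈ Icc a b) : |x - w| ≤ max |x - a| |x - b| := by
  rw [abs_le]
  constructor <;> linarith [hw.1, hw.2, le_abs_self (x - a), neg_le_abs (x - b),
    le_max_left |x - a| |x - b|, le_max_right |x - a| |x - b|]

lemma abs_sub_lt_max_of_mem_Ioo (hw : w ∈ Ioo a b) : |x - w| < max |x - a| |x - b| := by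
  rw [abs_lt]
  constructor <;> linarith [hw.1, hw.2, le_abs_self (x - a), neg_le_abs (x - b),
    le_max_left |x - a| |x - b|, le_max_right |x - a| |x - b|]

lemma isGreatest_abs_sub_image_Icc (hab : a ≤ b) :
    IsGreatest ((fun w => |x - w|) '' Icc a b) (max |x - a| |x - b|) := by
  refine ⟨?_, ?_⟩
  · rcases max_choice |x - a| |x - b| with h | h
    · exact ⟨a, left_mem_Icc.2 hab, h.symm⟩
    · exact ⟨b, right_mem_Icc.2 hab, h.symm⟩
  · rintro _ ⟨w, hw, rfl⟩
    exact abs_sub_le_max_of_mem_Icc hw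

lemma isLUB_abs_sub_image_Ioo (hab : a < b) :
    IsLUB ((fun w => |x - w|) '' Ioo a b) (max |x - a| |x - b|) := by
  refine isLUB_of_mem_closure ?_ ?_
  · rintro _ ⟨w, hw, rfl⟩
    exact (abs_sub_lt_max_of_mem_Ioo hw).le
  · have hcont : ContinuousOn (fun w : ℝ => |x - w|) (closure (Ioo a b)) := by fun_prop
    refine hcont.image_closure ?_
    rw [closure_Ioo hab.ne]
    exact (isGreatest_abs_sub_image_Icc hab.le).1

lemma isLUB_abs_sub_sub_image_Icc {g : ℝ → ℝ} (hab : a < b) (hg : ∀ w ∈ Icc a b, 0 ≤ g w)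
    (hg_Ioo : ∀ w ∈ Ioo a b, g w = 0) :
    IsLUB ((fun w => |x - w| - g w) '' Icc a b) (max |x - a| |x - b|) := by
  have hsub : (fun w => |x - w|) '' Ioo a b ⊆ (fun w => |x - w| - g w) '' Icc a b := by
    rintro _ ⟨w, hw, rfl⟩
    exact ⟨w, Ioo_subset_Icc_self hw, by simp only [hg_Ioo w hw, sub_zero]⟩
  refine ⟨?_, fun _ hM => (isLUB_abs_sub_image_Ioo hab).2 (upperBounds_mono_set hsub hM)⟩
  rintro _ ⟨w, hw, rfl⟩
  linarith [abs_sub_le_max_of_mem_Icc (x := x) hw, hg w hw]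

lemma abs_sub_sub_lt_max_of_mem_Icc {g : ℝ → ℝ} (hg : ∀ w ∈ Icc a b, 0 ≤ g w) (ha : 0 < g a)
    (hb : 0 < g b) (hw : w ∈ Icc a b) : |x - w| - g w < max |x - a| |x - b| := by
  rcases hw.1.eq_or_lt with rfl | haw
  · linarith [abs_sub_le_max_of_mem_Icc (x := x) hw]
  rcases hw.2.eq_or_lt with rfl | hwb
  · linarith [abs_sub_le_max_of_mem_Icc (x := x) hw]
  linarith [abs_sub_lt_max_of_mem_Ioo (x := x) ⟨haw, hwb⟩, hg w hw]

end DistanceOnInterval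

theorem stmt_13 (f : ℕ → ℝ → ℝ)
    (hf : ∀ k z, f k z = if z = 0 ∨ z = 1 then 1 / (k : ℝ) else 0) :
    TendstoUniformly f (fun _ => 0) Filter.atTop ∧
    (∀ k : ℕ, 1 ≤ k →
      {x : ℝ | ∃ z ∈ Set.Icc (0 : ℝ) 1,
        sSup ((fun w => |x - w| - f k w) '' Set.Icc (0 : ℝ) 1) = |x - z| - f k z} = ∅) ∧
    {x : ℝ | ∃ z ∈ Set.Icc (0 : ℝ) 1,
        sSup ((fun w => |x - w|) '' Set.Icc (0 : ℝ) 1) = |x - z|} = Set.univ := by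
  have hf_nonneg : ∀ k w, 0 ≤ f k w := fun k w => by
    rw [hf]; split_ifs <;> positivity
  refine ⟨?_, fun k hk => ?_, ?_⟩
  · refine tendstoUniformly_zero_of_norm_le tendsto_one_div_atTop_nhds_zero_nat fun k z => ?_
    rw [Real.norm_eq_abs, abs_of_nonneg (hf_nonneg k z), hf]
    split_ifs <;> simp
  · have hk_pos : 0 < 1 / (k : ℝ) := one_div_pos.2 (Nat.cast_pos.2 hk)
    have hf_Ioo : ∀ w ∈ Ioo (0 : ℝ) 1, f k w = 0 := fun w hw => by
      rw [hf, if_neg]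
      rintro (rfl | rfl)
      exacts [hw.1.false, hw.2.false]
    refine eq_empty_iff_forall_notMem.2 fun x ⟨z, hz, hattained⟩ => ?_
    rw [(isLUB_abs_sub_sub_image_Icc zero_lt_one (fun w _ => hf_nonneg k w) hf_Ioo).csSup_eq
      ⟨_, mem_image_of_mem _ (left_mem_Icc.2 zero_le_one)⟩] at hattained
    refine (abs_sub_sub_lt_max_of_mem_Icc (fun w _ => hf_nonneg k w) ?_ ?_ hz).ne' hattained
    · rwa [hf, if_pos (Or.inl rfl)]
    · rwa [hf, if_pos (Or.inr rfl)]
  · refine eq_univ_of_forall fun x => ?_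
    have hgreatest := isGreatest_abs_sub_image_Icc (x := x) zero_le_one
    obtain ⟨z, hz, hz_max⟩ := hgreatest.1
    exact ⟨z, hz, hgreatest.csSup_eq.trans hz_max.symm⟩
end
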